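/- arXiv:2209.13485 — 2 statements merged into one kernel-verified Lean document; each statement's English description precedes it below -/
import Mathlib

section
/- Deterministic trimming-vs-truncation claim: let b>0 and t ≤ k−⌊ηn⌋. If #{i∈[n] : Z_i > b} ≤ t, then |T_k − (1/n)Σ_{i=1}^n (Z_i∧b)| ≤ 2bk/n. Moreover, for a nonnegative random variable Z_1 with E[Z_1^q]<∞, |E[Z_1] − E[Z_1∧b]| ≤ E[Z_1^q]/b^{q−1}. -/
/-!
Put `V i = min (Z i) b ∈ [0, b]`. Then `W` agrees with `V` outside a set `B` of at most
`⌊η n⌋ + t ≤ k` indices. An `(n - k)`-subset inside `Bᶜ` shows that `T_k` exceeds the mean of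
`V` by at most `b k / n`. Conversely every `(n - k)`-subset contains all but at most `2k` of the
indices where `W = V`, each of weight at most `b`, and `W ≥ 0` elsewhere; so `T_k` falls short
of the mean of `V` by at most `2 b k / n`.

For the expectation, `Z - min Z b ≤ Z ^ q / b ^ (q - 1)` pointwise.
-/

open MeasureTheory ProbabilityTheory Real
open scoped RealInnerProductSpace ENNReal NNReal

namespace CovPaper

variable {d n : ℕ}

instance {d : ℕ} : MeasurableSpace (Matrix (Fin d) (Fin d) ℝ) :=
  inferInstanceAs (MeasurableSpace (Fin d → Fin d → ℝ))

/-- Operator norm of a real `d × d` matrix, viewed as an operator on Euclidean space. -/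
noncomputable def opNorm (A : Matrix (Fin d) (Fin d) ℝ) : ℝ :=
  ‖Matrix.toEuclideanCLM (𝕜 := ℝ) A‖

/-- Quadratic form `⟨v, A v⟩`. -/
noncomputable def quadForm (A : Matrix (Fin d) (Fin d) ℝ)
    (v : EuclideanSpace ℝ (Fin d)) : ℝ :=
  ⟪v, Matrix.toEuclideanCLM (𝕜 := ℝ) A v⟫

/-- Effective rank `tr(A)/‖A‖`. -/
noncomputable def effRank (A : Matrix (Fin d) (Fin d) ℝ) : ℝ :=
  A.trace / opNorm A

open Classical in
/-- The number of indices `i` satisfying `P i`. -/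
noncomputable def nCount (P : Fin n → Prop) : ℕ :=
  (Finset.univ.filter P).card

/-- Trimmed mean with trimming parameter `k`: the infimum, over all subsets `S` of
`[n]` of cardinality `n - k`, of the average of `W` over `S`. -/
noncomputable def trimmedMean (k : ℕ) (W : Fin n → ℝ) : ℝ :=
  ⨅ S : {S : Finset (Fin n) // S.card = n - k}, (∑ i ∈ S.1, W i) / ((n - k : ℕ) : ℝ)

/-- Gaussian measure `Γ_{v,γ}` on Euclidean space, with mean `v` and covariance `γ² I`. -/
noncomputable def gaussianE (v : EuclideanSpace ℝ (Fin d)) (γ : ℝ) :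
    Measure (EuclideanSpace ℝ (Fin d)) :=
  (Measure.pi fun i : Fin d => gaussianReal (v i) (γ ^ 2).toNNReal).map
    (MeasurableEquiv.toLp 2 (Fin d → ℝ))

/-- The numerical constant `c = ∑_{j≥1} e^{-j/2}·6(j+1)²/j^{3/2} + 4`. -/
noncomputable def cSeries : ℝ :=
  (∑' j : ℕ, Real.exp (-((j : ℝ) + 1) / 2) *
    (6 * ((j : ℝ) + 2) ^ 2 / ((j : ℝ) + 1) ^ ((3 : ℝ) / 2))) + 4

variable {Ω : Type} [MeasureSpace Ω]

/-- The `L^p`–`L^2` moment constant `κ_p`. -/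
noncomputable def kappa (X : Ω → EuclideanSpace ℝ (Fin d))
    (S : Matrix (Fin d) (Fin d) ℝ) (p : ℝ) : ℝ :=
  sSup {r : ℝ | ∃ v : EuclideanSpace ℝ (Fin d), quadForm S v = 1 ∧
    r = (∫ ω, |⟪X ω, v⟫| ^ p) ^ (1 / p)}

/-- `S` is the covariance matrix of the (centered) random vector `X`. -/
def IsCovMatrix (X : Ω → EuclideanSpace ℝ (Fin d))
    (S : Matrix (Fin d) (Fin d) ℝ) : Prop :=
  ∀ i j, S i j = ∫ ω, X ω i * X ω j

/-- `X` is an i.i.d. sample of copies of `X₀`. -/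
def IsIIDSample (X : Fin n → Ω → EuclideanSpace ℝ (Fin d))
    (X₀ : Ω → EuclideanSpace ℝ (Fin d)) : Prop :=
  iIndepFun X ℙ ∧ ∀ i, IdentDistrib (X i) X₀ ℙ ℙ

/-- The trimmed quadratic-form estimator `ê_k(v)` computed from data `Y`. -/
noncomputable def eHat (Y : Fin n → EuclideanSpace ℝ (Fin d)) (k : ℕ)
    (v : EuclideanSpace ℝ (Fin d)) : ℝ :=
  trimmedMean k fun i => ⟪Y i, v⟫ ^ 2

section TrimmedMean

variable {k : ℕ} {b : ℝ} {V W : Fin n → ℝ}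

lemma nCount_le_add {P Q R : Fin n → Prop} (h : ∀ i, P i → Q i ∨ R i) :
    nCount P ≤ nCount Q + nCount R := by
  classical
  unfold nCount
  calc (Finset.univ.filter P).card
      ≤ (Finset.univ.filter Q ∪ Finset.univ.filter R).card :=
        Finset.card_le_card fun i hi => by simpa using h i (Finset.mem_filter.1 hi).2
    _ ≤ _ := Finset.card_union_le _ _

lemma trimmedMean_le_of_card_eq (W : Fin n → ℝ) {S : Finset (Fin n)} (hS : S.card = n - k) :
    trimmedMean k W ≤ (∑ i ∈ S, W i) / ((n - k : ℕ) : ℝ) :=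
  ciInf_le (Finite.bddBelow_range _) (⟨S, hS⟩ : {S : Finset (Fin n) // S.card = n - k})

lemma le_trimmedMean {c : ℝ}
    (h : ∀ S : Finset (Fin n), S.card = n - k →
      c ≤ (∑ i ∈ S, W i) / ((n - k : ℕ) : ℝ)) :
    c ≤ trimmedMean k W := by
  obtain ⟨S, -, hS⟩ := Finset.exists_subset_card_eq (s := Finset.univ)
    (by simp : n - k ≤ (Finset.univ : Finset (Fin n)).card)
  have : Nonempty {S : Finset (Fin n) // S.card = n - k} := ⟨⟨S, hS⟩⟩
  exact le_ciInf fun S => h S.1 S.2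

lemma sum_le_sum_add_card_compl_mul (hVb : ∀ i, V i ≤ b) (T : Finset (Fin n)) :
    ∑ i, V i ≤ ∑ i ∈ T, V i + Tᶜ.card * b := by
  rw [← Finset.sum_add_sum_compl T V]
  gcongr
  simpa using Finset.sum_le_card_nsmul Tᶜ V b fun i _ => hVb i

variable {B : Finset (Fin n)}

lemma trimmedMean_le_mean_add (hkn : k < n) (hV0 : ∀ i, 0 ≤ V i) (hVb : ∀ i, V i ≤ b)
    (hB : B.card ≤ k) (hWV : ∀ i ∉ B, W i = V i) :
    trimmedMean k W ≤ (∑ i, V i) / n + b * k / n := by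
  obtain ⟨S, hSB, hS⟩ : ∃ S ⊆ Bᶜ, S.card = n - k :=
    Finset.exists_subset_card_eq (by rw [Finset.card_compl, Fintype.card_fin]; omega)
  have hsum_eq : ∑ i ∈ S, W i = ∑ i ∈ S, V i :=
    Finset.sum_congr rfl fun i hi => hWV i (Finset.mem_compl.1 (hSB hi))
  have hs_le_sum : ∑ i ∈ S, V i ≤ ∑ i, V i := Finset.sum_le_univ_sum_of_nonneg hV0
  have hs_le_card : ∑ i ∈ S, V i ≤ (n - k : ℕ) * b := by
    simpa [hS] using Finset.sum_le_card_nsmul S V b fun i _ => hVb i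
  have hnk : (0 : ℝ) < (n - k : ℕ) := by exact_mod_cast Nat.sub_pos_of_lt hkn
  have hn : (0 : ℝ) < n := by exact_mod_cast (Nat.zero_le k).trans_lt hkn
  calc trimmedMean k W ≤ (∑ i ∈ S, V i) / ((n - k : ℕ) : ℝ) :=
        hsum_eq ▸ trimmedMean_le_of_card_eq W hS
    _ ≤ (∑ i, V i) / n + b * k / n := by
        rw [← add_div, div_le_div_iff₀ hnk hn]
        rw [Nat.cast_sub hkn.le] at hnk hs_le_card ⊢
        linarith [mul_le_mul_of_nonneg_right hs_le_sum hnk.le,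
          mul_le_mul_of_nonneg_right hs_le_card (Nat.cast_nonneg (α := ℝ) k)]

lemma mean_sub_le_trimmedMean (hkn : k < n) (hb : 0 ≤ b) (hVb : ∀ i, V i ≤ b)
    (hW : ∀ i, 0 ≤ W i) (hB : B.card ≤ k) (hWV : ∀ i ∉ B, W i = V i) :
    (∑ i, V i) / n - 2 * b * k / n ≤ trimmedMean k W := by
  refine le_trimmedMean fun S hS => ?_
  have hgood : ∑ i ∈ S ∩ Bᶜ, V i ≤ ∑ i ∈ S, W i := by
    calc ∑ i ∈ S ∩ Bᶜ, V i = ∑ i ∈ S ∩ Bᶜ, W i :=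
          Finset.sum_congr rfl fun i hi =>
            (hWV i (Finset.mem_compl.1 (Finset.mem_inter.1 hi).2)).symm
      _ ≤ ∑ i ∈ S, W i :=
          Finset.sum_le_sum_of_subset_of_nonneg Finset.inter_subset_left fun i _ _ => hW i
  have hcard : ((S ∩ Bᶜ)ᶜ.card : ℝ) ≤ 2 * k := by
    have : (S ∩ Bᶜ)ᶜ.card ≤ 2 * k := by
      rw [Finset.compl_inter, compl_compl]
      refine (Finset.card_union_le _ _).trans ?_
      rw [Finset.card_compl, Fintype.card_fin, hS]
      omega
    exact_mod_cast this
  have hsum : ∑ i, V i - 2 * b * k ≤ ∑ i ∈ S, W i := by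
    linarith [sum_le_sum_add_card_compl_mul hVb (S ∩ Bᶜ), mul_le_mul_of_nonneg_right hcard hb]
  have hnk : (0 : ℝ) < (n - k : ℕ) := by exact_mod_cast Nat.sub_pos_of_lt hkn
  have hnk_le : ((n - k : ℕ) : ℝ) ≤ n := by exact_mod_cast Nat.sub_le n k
  calc (∑ i, V i) / n - 2 * b * k / n = (∑ i, V i - 2 * b * k) / n := (sub_div _ _ _).symm
    _ ≤ (∑ i ∈ S, W i) / n := by gcongr
    _ ≤ (∑ i ∈ S, W i) / ((n - k : ℕ) : ℝ) :=
        div_le_div_of_nonneg_left (Finset.sum_nonneg fun i _ => hW i) hnk hnk_le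

lemma abs_trimmedMean_sub_mean_le (hkn : k < n) (hb : 0 ≤ b) (hV0 : ∀ i, 0 ≤ V i)
    (hVb : ∀ i, V i ≤ b) (hW : ∀ i, 0 ≤ W i) (hbad : nCount (fun i => W i ≠ V i) ≤ k) :
    |trimmedMean k W - (∑ i, V i) / n| ≤ 2 * b * k / n := by
  obtain ⟨B, hB, hWV⟩ : ∃ B : Finset (Fin n), B.card ≤ k ∧ ∀ i ∉ B, W i = V i :=
    ⟨_, hbad, fun i hi => not_not.1 fun h => hi (by simp [h])⟩
  have hupper := trimmedMean_le_mean_add hkn hV0 hVb hB hWV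
  have hlower := mean_sub_le_trimmedMean hkn hb hVb hW hB hWV
  have hslack : 0 ≤ b * k / n := by positivity
  have htwice : 2 * b * k / n = 2 * (b * k / n) := by ring
  rw [abs_le]
  constructor <;> linarith

end TrimmedMean

section Truncation

variable {α : Type*} [MeasurableSpace α] {μ : Measure α} {b q : ℝ}

lemma sub_min_le_rpow_div {x : ℝ} (hx : 0 ≤ x) (hb : 0 < b) (hq : 1 ≤ q) :
    x - min x b ≤ x ^ q / b ^ (q - 1) := by
  have hbq : 0 < b ^ (q - 1) := Real.rpow_pos_of_pos hb _
  rcases le_or_gt x b with hxb | hbx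
  · rw [min_eq_left hxb, sub_self]
    exact div_nonneg (Real.rpow_nonneg hx q) hbq.le
  · rw [le_div_iff₀ hbq]
    calc (x - min x b) * b ^ (q - 1) ≤ x * x ^ (q - 1) := by
          gcongr
          exact sub_le_self _ (le_min hx hb.le)
      _ = x ^ q := by rw [← Real.rpow_one_add' hx (by linarith)]; ring_nf

/-- The excess `f - min f b` is dominated by `f ^ q / b ^ (q - 1)`, hence integrable; so `f`
and `min f b` are integrable together, and when neither is, both integrals vanish. -/
lemma abs_integral_sub_integral_min_le {f : α → ℝ} (hb : 0 < b) (hq : 1 ≤ q)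
    (hf0 : ∀ x, 0 ≤ f x) (hf : AEStronglyMeasurable f μ)
    (hmom : Integrable (fun x => f x ^ q) μ) :
    |(∫ x, f x ∂μ) - ∫ x, min (f x) b ∂μ| ≤ (∫ x, f x ^ q ∂μ) / b ^ (q - 1) := by
  have hmin_meas : AEStronglyMeasurable (fun x => min (f x) b) μ :=
    hf.inf aestronglyMeasurable_const
  have hexcess0 : ∀ x, 0 ≤ f x - min (f x) b := fun x => sub_nonneg.2 (min_le_left _ _)
  have hexcess : Integrable (fun x => f x - min (f x) b) μ :=
    (hmom.div_const _).mono' (hf.sub hmin_meas) <| ae_of_all _ fun x => by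
      rw [Real.norm_of_nonneg (hexcess0 x)]
      exact sub_min_le_rpow_div (hf0 x) hb hq
  have hdiff :
      |(∫ x, f x ∂μ) - ∫ x, min (f x) b ∂μ| ≤ ∫ x, f x - min (f x) b ∂μ := by
    by_cases hfi : Integrable f μ
    · have hmin : Integrable (fun x => min (f x) b) μ :=
        (hfi.sub hexcess).congr (ae_of_all _ fun x => sub_sub_cancel _ _)
      rw [← integral_sub hfi hmin, abs_of_nonneg (integral_nonneg hexcess0)]
    · have hmin : ¬Integrable (fun x => min (f x) b) μ := fun hmin =>
        hfi ((hmin.add hexcess).congr (ae_of_all _ fun x => add_sub_cancel _ _))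
      rw [integral_undef hfi, integral_undef hmin, sub_self, abs_zero]
      exact integral_nonneg hexcess0
  calc |(∫ x, f x ∂μ) - ∫ x, min (f x) b ∂μ| ≤ ∫ x, f x - min (f x) b ∂μ := hdiff
    _ ≤ ∫ x, f x ^ q / b ^ (q - 1) ∂μ :=
        integral_mono hexcess (hmom.div_const _) fun x => sub_min_le_rpow_div (hf0 x) hb hq
    _ = (∫ x, f x ^ q ∂μ) / b ^ (q - 1) := integral_div _ _

end Truncation

theorem trim_vs_truncate_general
    {n k t : ℕ} {η b : ℝ} (hb : 0 < b)
    (hkn : k < n) (ht : ⌊η * n⌋₊ + t ≤ k)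
    (Z W : Fin n → ℝ) (hZ : ∀ i, 0 ≤ Z i) (hW : ∀ i, 0 ≤ W i)
    (hcontam : nCount (fun i => Z i ≠ W i) ≤ ⌊η * n⌋₊)
    (hcount : nCount (fun i => b < Z i) ≤ t)
    {Ω : Type} [MeasureSpace Ω]
    (Z₀ : Ω → ℝ) (q : ℝ) (hq : 2 ≤ q) (hZ₀ : ∀ ω, 0 ≤ Z₀ ω)
    (hZm : Measurable Z₀) (hmom : Integrable fun ω => Z₀ ω ^ q) :
    |trimmedMean k W - (∑ i, min (Z i) b) / n| ≤ 2 * b * k / n ∧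
    |(∫ ω, Z₀ ω) - ∫ ω, min (Z₀ ω) b| ≤ (∫ ω, Z₀ ω ^ q) / b ^ (q - 1) := by
  have hbad : nCount (fun i => W i ≠ min (Z i) b) ≤ k := by
    refine (nCount_le_add fun i hi => ?_).trans ((add_le_add hcontam hcount).trans ht)
    by_contra! h
    exact hi (h.1 ▸ (min_eq_left h.2).symm)
  exact ⟨abs_trimmedMean_sub_mean_le hkn hb.le (fun i => le_min (hZ i) hb.le)
      (fun i => min_le_right _ _) hW hbad,
    abs_integral_sub_integral_min_le hb (by linarith) hZ₀ hZm.aestronglyMeasurable hmom⟩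

/-- Deterministic trimming-vs-truncation claim (Claim 3.4), together with the
truncation bias bound for a nonnegative random variable. -/
theorem trim_vs_truncate
    {n k t : ℕ} {η b : ℝ} (hb : 0 < b) (hη0 : 0 ≤ η) (hη1 : η < 1)
    (hkn : k < n) (ht : ⌊η * n⌋₊ + t ≤ k)
    (Z W : Fin n → ℝ) (hZ : ∀ i, 0 ≤ Z i) (hW : ∀ i, 0 ≤ W i)
    (hcontam : nCount (fun i => Z i ≠ W i) ≤ ⌊η * n⌋₊)
    (hcount : nCount (fun i => b < Z i) ≤ t)
    {Ω : Type} [MeasureSpace Ω] [IsProbabilityMeasure (ℙ : Measure Ω)]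
    (Z₀ : Ω → ℝ) (q : ℝ) (hq : 2 ≤ q) (hZ₀ : ∀ ω, 0 ≤ Z₀ ω)
    (hZm : Measurable Z₀) (hmom : Integrable fun ω => Z₀ ω ^ q) :
    |trimmedMean k W - (∑ i, min (Z i) b) / n| ≤ 2 * b * k / n ∧
    |(∫ ω, Z₀ ω) - ∫ ω, min (Z₀ ω) b| ≤ (∫ ω, Z₀ ω ^ q) / b ^ (q - 1) :=
  trim_vs_truncate_general hb hkn ht Z W hZ hW hcontam hcount Z₀ q hq hZ₀ hZm hmom

end CovPaper
end

section
/- For any integer t>0, setting b_q(t) := e^{2/q}·(n·E[Z_1^q]/t)^{1/q}, the event {#{i∈[n] : Z_i > b_q(t)} ≤ t} holds with probability at least 1 − e^{−t−2}. -/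
/-! Let `p = P(Z₀ > b)`. Markov's inequality for `Z₀^q` at level `b^q = e² n E[Z₀^q] / t` gives
`n p ≤ t e⁻²`. If more than `t` of the `Z i` exceed `b`, then all `Z i` with `i ∈ S` do for some
`(t+1)`-set `S`, so by independence and a union bound this has probability at most
`C(n, t+1) p^(t+1) ≤ (n p)^(t+1) / (t+1)! ≤ e^(-2(t+1)) t^(t+1) / (t+1)! ≤ e^(-t-2)`. -/

open MeasureTheory ProbabilityTheory Real
open scoped RealInnerProductSpace ENNReal NNReal

namespace CovPaper

variable {d n : ℕ}

variable {Ω : Type} [MeasureSpace Ω]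

open Finset
open scoped Nat

section Tail

variable {Ω : Type*} [MeasurableSpace Ω] {μ : Measure Ω}

theorem mul_measureReal_rpow_moment_lt_le_one [IsFiniteMeasure μ] {X : Ω → ℝ} (hX : 0 ≤ᵐ[μ] X)
    {q : ℝ} (hq : 0 < q) (hint : Integrable (fun ω => X ω ^ q) μ) {c : ℝ} (hc : 0 ≤ c) :
    c * μ.real {ω | (c * ∫ ω, X ω ^ q ∂μ) ^ (1 / q) < X ω} ≤ 1 := by
  set E := ∫ ω, X ω ^ q ∂μ
  have hXq : 0 ≤ᵐ[μ] fun ω => X ω ^ q := hX.mono fun ω h => rpow_nonneg h q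
  have hE : 0 ≤ E := integral_nonneg_of_ae hXq
  have hb : 0 ≤ c * E := mul_nonneg hc hE
  rcases hE.eq_or_lt with hE0 | hEpos
  · have hzero : (fun ω => X ω ^ q) =ᵐ[μ] 0 :=
      (integral_eq_zero_iff_of_nonneg_ae hXq hint).mp hE0.symm
    have hnull : μ {ω | (c * E) ^ (1 / q) < X ω} = 0 := by
      refine measure_mono_null ?_ (ae_iff.mp (hzero.and hX))
      rintro ω (hω : _ < X ω) ⟨hXq0 : X ω ^ q = 0, hX0 : 0 ≤ X ω⟩
      have hXω : X ω = 0 := ((rpow_eq_zero_iff_of_nonneg hX0).mp hXq0).1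
      exact (rpow_nonneg hb _).not_gt (hXω ▸ hω)
    rw [measureReal_def, hnull]
    simp
  · have hmarkov := mul_meas_ge_le_integral_of_nonneg hXq hint (c * E)
    have hsub : {ω | (c * E) ^ (1 / q) < X ω} ⊆ {ω | c * E ≤ X ω ^ q} := fun ω hω => by
      have := rpow_le_rpow (rpow_nonneg hb _) (le_of_lt hω) hq.le
      rwa [← rpow_mul hb, one_div_mul_cancel hq.ne', rpow_one] at this
    refine le_of_mul_le_mul_right ?_ hEpos
    calc c * μ.real {ω | (c * E) ^ (1 / q) < X ω} * E
        ≤ c * E * μ.real {ω | c * E ≤ X ω ^ q} := by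
          rw [mul_right_comm]; exact mul_le_mul_of_nonneg_left (measureReal_mono hsub) hb
      _ ≤ 1 * E := by rwa [one_mul]

open Classical in
theorem measure_le_card_filter_mem_le_choose_mul_pow {ι β : Type*} [Fintype ι] [MeasurableSpace β]
    {X : ι → Ω → β} (hX : iIndepFun X μ) {s : Set β} (hs : MeasurableSet s) {p : ℝ≥0∞}
    (hp : ∀ i, μ (X i ⁻¹' s) ≤ p) (k : ℕ) :
    μ {ω | k ≤ #{i | X i ω ∈ s}} ≤ (Fintype.card ι).choose k * p ^ k := by
  have hcover : {ω | k ≤ #{i | X i ω ∈ s}} ⊆ ⋃ S ∈ powersetCard k univ, ⋂ i ∈ S, X i ⁻¹' s := by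
    intro ω hω
    obtain ⟨S, hSsub, hScard⟩ := exists_subset_card_eq hω
    refine Set.mem_biUnion (mem_powersetCard_univ.mpr hScard) (Set.mem_iInter₂.mpr fun i hi => ?_)
    exact (mem_filter.mp (hSsub hi)).2
  calc μ {ω | k ≤ #{i | X i ω ∈ s}}
      ≤ ∑ S ∈ powersetCard k univ, μ (⋂ i ∈ S, X i ⁻¹' s) :=
        (measure_mono hcover).trans (measure_biUnion_finset_le _ _)
    _ ≤ ∑ S ∈ powersetCard k (univ : Finset ι), p ^ k := by
        refine sum_le_sum fun S hS => ?_
        rw [hX.measure_inter_preimage_eq_mul S (sets := fun _ => s) (fun _ _ => hs),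
          ← (mem_powersetCard_univ.mp hS)]
        exact prod_le_pow_card _ _ _ fun i _ => hp i
    _ = (Fintype.card ι).choose k * p ^ k := by
        rw [sum_const, card_powersetCard, card_univ, nsmul_eq_mul]

end Tail

theorem choose_mul_pow_le_exp_neg {n t : ℕ} {p : ℝ} (hp : 0 ≤ p) (hnp : n * p ≤ t * exp (-2)) :
    n.choose (t + 1) * p ^ (t + 1) ≤ exp (-t - 2) :=
  calc n.choose (t + 1) * p ^ (t + 1) ≤ (n : ℝ) ^ (t + 1) / (t + 1)! * p ^ (t + 1) := by
        gcongr; exact Nat.choose_le_pow_div _ _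
    _ = (n * p) ^ (t + 1) / (t + 1)! := by ring
    _ ≤ (t * exp (-2)) ^ (t + 1) / (t + 1)! := by gcongr
    _ = exp (-2) ^ (t + 1) * ((t : ℝ) ^ (t + 1) / (t + 1)!) := by ring
    _ ≤ exp (-2) ^ (t + 1) * exp t := by
        gcongr; exact pow_div_factorial_le_exp _ t.cast_nonneg _
    _ = exp (-t - 2) := by rw [← exp_nat_mul, ← exp_add]; push_cast; ring_nf

theorem counting_single_general
    {Ω : Type} [MeasureSpace Ω] [IsProbabilityMeasure (ℙ : Measure Ω)]
    {n : ℕ} (Z : Fin n → Ω → ℝ) (Z₀ : Ω → ℝ) (q : ℝ) (t : ℕ)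
    (hiid : iIndepFun Z ℙ)
    (hident : ∀ i, IdentDistrib (Z i) Z₀ ℙ ℙ)
    (hnonneg : ∀ ω, 0 ≤ Z₀ ω)
    (hq : 2 ≤ q) (hmom : Integrable fun ω => Z₀ ω ^ q) (ht : 0 < t) :
    ℙ {ω | nCount (fun i =>
        Real.exp (2 / q) * ((n * ∫ ω', Z₀ ω' ^ q) / t) ^ (1 / q) < Z i ω) ≤ t} ≥
      1 - ENNReal.ofReal (Real.exp (-(t : ℝ) - 2)) := by
  set E := ∫ ω, Z₀ ω ^ q
  set c : ℝ := exp 2 * n / t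
  have hq0 : 0 < q := by linarith
  have ht0 : (0 : ℝ) < t := by exact_mod_cast ht
  have hE : 0 ≤ E := integral_nonneg fun ω => rpow_nonneg (hnonneg ω) q
  have hb : exp (2 / q) * ((n * E) / t) ^ (1 / q) = (c * E) ^ (1 / q) := by
    rw [div_eq_mul_one_div 2, exp_mul, ← mul_rpow (exp_pos 2).le (by positivity)]
    congr 1
    simp only [c]
    ring
  set p := (ℙ : Measure Ω).real {ω | (c * E) ^ (1 / q) < Z₀ ω}
  have hnp : n * p ≤ t * exp (-2) := by
    have := mul_measureReal_rpow_moment_lt_le_one (ae_of_all _ hnonneg) hq0 hmom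
      (c := c) (by positivity)
    rw [exp_neg, ← div_eq_mul_inv, le_div_iff₀ (exp_pos 2)]
    calc n * p * exp 2 = c * p * t := by simp only [c]; field_simp
      _ ≤ 1 * t := by gcongr
      _ = t := one_mul _
  have hZi : ∀ i, ℙ (Z i ⁻¹' Set.Ioi ((c * E) ^ (1 / q))) ≤ ENNReal.ofReal p := fun i => by
    rw [(hident i).measure_mem_eq measurableSet_Ioi, ofReal_measureReal]
    rfl
  have htail : ℙ {ω | t + 1 ≤ nCount fun i => (c * E) ^ (1 / q) < Z i ω} ≤
      ENNReal.ofReal (exp (-t - 2)) := by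
    refine (measure_le_card_filter_mem_le_choose_mul_pow hiid measurableSet_Ioi hZi _).trans ?_
    rw [Fintype.card_fin, ← ENNReal.ofReal_pow measureReal_nonneg, ← ENNReal.ofReal_natCast,
      ← ENNReal.ofReal_mul (by positivity)]
    exact ENNReal.ofReal_le_ofReal (choose_mul_pow_le_exp_neg measureReal_nonneg hnp)
  rw [hb, ge_iff_le, tsub_le_iff_right]
  calc 1 = ℙ (Set.univ : Set Ω) := measure_univ.symm
    _ ≤ _ := measure_univ_le_add_compl _
    _ ≤ _ := by
      gcongr
      exact (measure_mono fun ω hω => Nat.succ_le_of_lt (not_le.mp hω)).trans htail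

/-- Counting claim for a single sequence of i.i.d. nonnegative random variables
(Claim 3.5). -/
theorem counting_single
    {Ω : Type} [MeasureSpace Ω] [IsProbabilityMeasure (ℙ : Measure Ω)]
    {n : ℕ} (Z : Fin n → Ω → ℝ) (Z₀ : Ω → ℝ) (q : ℝ) (t : ℕ)
    (hmeas : Measurable Z₀)
    (hiid : iIndepFun Z ℙ)
    (hident : ∀ i, IdentDistrib (Z i) Z₀ ℙ ℙ)
    (hnonneg : ∀ ω, 0 ≤ Z₀ ω) (hZn : ∀ i ω, 0 ≤ Z i ω)
    (hq : 2 ≤ q) (hmom : Integrable fun ω => Z₀ ω ^ q) (ht : 0 < t) :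
    ℙ {ω | nCount (fun i =>
        Real.exp (2 / q) * ((n * ∫ ω', Z₀ ω' ^ q) / t) ^ (1 / q) < Z i ω) ≤ t} ≥
      1 - ENNReal.ofReal (Real.exp (-(t : ℝ) - 2)) :=
  counting_single_general Z Z₀ q t hiid hident hnonneg hq hmom ht

end CovPaper
end
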